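/- arXiv:2110.15389 — 2 statements merged into one kernel-verified Lean document; each statement's English description precedes it below -/
import Mathlib

section
/- Let f ∈ ℤ[x] be a nonconstant polynomial with integer coefficients. Then the set P_f = { p : p is prime and p divides f(n) for some natural number n } is infinite. -/
open Polynomial

/-- A nonconstant integer polynomial takes values of arbitrarily large absolute
value along any injective arithmetic progression `n ↦ N * n`. -/
lemma exists_big_value (f : Polynomial ℤ) (hf : 0 < f.natDegree) (N : ℤ) (hN : N ≠ 0)
    (B : ℤ) : ∃ n : ℕ, B < |f.eval (N * n)| := by
  by_contra h
  push_neg at h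
  have hA : (⋃ v ∈ Set.Icc (-B) B, { x : ℤ | f.eval x = v }).Finite := by
    refine Set.Finite.biUnion (Set.finite_Icc _ _) fun v _ => ?_
    have hne : f - C v ≠ 0 := by
      intro hzero
      have : f = C v := by linear_combination (norm := ring_nf) hzero
      rw [this, natDegree_C] at hf
      exact lt_irrefl 0 hf
    have := Polynomial.finite_setOf_isRoot hne
    refine this.subset fun x hx => ?_
    simp only [Set.mem_setOf_eq, IsRoot, eval_sub, eval_C] at hx ⊢
    omega
  have hinj : Function.Injective (fun n : ℕ => N * (n : ℤ)) := by
    intro a b hab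
    simp only at hab
    have := mul_left_cancel₀ hN hab
    exact_mod_cast this
  have hsub : Set.range (fun n : ℕ => N * (n : ℤ)) ⊆
      ⋃ v ∈ Set.Icc (-B) B, { x : ℤ | f.eval x = v } := by
    rintro x ⟨n, rfl⟩
    have hb : f.eval (N * n) ∈ Set.Icc (-B) B := by rw [Set.mem_Icc]; exact abs_le.mp (h n)
    exact Set.mem_biUnion hb rfl
  exact (Set.infinite_range_of_injective hinj).mono hsub hA

/-- For a nonconstant polynomial `f ∈ ℤ[x]`, the set of primes dividing `f(n)`
for some natural number `n` is infinite. -/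
theorem infinite_primes_dividing_poly_values (f : Polynomial ℤ)
    (hf : 0 < f.natDegree) :
    {p : ℕ | p.Prime ∧ ∃ n : ℕ, (p : ℤ) ∣ f.eval (n : ℤ)}.Infinite := by
  set c : ℤ := f.eval 0 with hc
  by_cases hc0 : c = 0
  · -- every prime divides f(p)
    refine Set.infinite_of_injective_forall_mem (f := fun p : Nat.Primes => (p : ℕ)) ?_ ?_
    · exact fun a b hab => Nat.Primes.coe_nat_injective hab
    · intro p
      refine ⟨p.2, p, ?_⟩
      have := Polynomial.sub_dvd_eval_sub ((p : ℕ) : ℤ) 0 f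
      rw [← hc, hc0, sub_zero, sub_zero] at this
      exact this
  · by_contra h
    rw [Set.not_infinite] at h
    set T := h.toFinset with hT
    set P : ℤ := ∏ p ∈ T, (p : ℤ) with hP
    have hPpos : 0 < P := Finset.prod_pos fun p hp => by
      have : p.Prime := (h.mem_toFinset.mp hp).1
      exact_mod_cast this.pos
    set N : ℤ := |c| * P with hN
    have hNne : N ≠ 0 := by
      have : |c| ≠ 0 := abs_ne_zero.mpr hc0
      positivity
    obtain ⟨n, hn⟩ := exists_big_value f hf N hNne |c|
    set m : ℤ := f.eval (N * n) with hm
    have hdvd : N ∣ m - c := by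
      have := Polynomial.sub_dvd_eval_sub (N * n) 0 f
      rw [sub_zero, ← hc, ← hm] at this
      exact dvd_trans (Dvd.intro _ rfl) this
    have hcm : c ∣ m := by
      have hcN : c ∣ N := ((dvd_abs c c).mpr dvd_rfl).mul_right P
      have h3 := dvd_trans hcN hdvd
      have := dvd_add h3 (dvd_refl c)
      simpa using this
    obtain ⟨u, hu⟩ := hcm
    have hPu : P ∣ u - 1 := by
      have h1 : c * P ∣ c * (u - 1) := by
        rw [← abs_dvd, abs_mul, abs_of_pos hPpos]
        rw [mul_sub, mul_one, ← hu]
        exact hdvd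
      exact (mul_dvd_mul_iff_left hc0).mp h1
    have hu1 : 1 < |u| := by
      have hcpos : 0 < |c| := abs_pos.mpr hc0
      have : |c| < |c| * |u| := by rw [← abs_mul, ← hu]; exact hn
      nlinarith [abs_nonneg u]
    have hu2 : 2 ≤ u.natAbs := by
      have : (1 : ℤ) < (u.natAbs : ℤ) := by rwa [Int.abs_eq_natAbs] at hu1
      exact_mod_cast this
    set q : ℕ := u.natAbs.minFac with hq
    have hqp : q.Prime := Nat.minFac_prime (by omega)
    have hqu : (q : ℤ) ∣ u := by
      have h2 : (q : ℤ) ∣ (u.natAbs : ℤ) := Int.natCast_dvd_natCast.mpr (Nat.minFac_dvd _)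
      exact h2.trans (Int.natAbs_dvd.mpr dvd_rfl)
    have hNpos : 0 < N := by
      have : 0 < |c| := abs_pos.mpr hc0
      positivity
    have hqS : q ∈ T := by
      rw [h.mem_toFinset]
      refine ⟨hqp, (N * n).toNat, ?_⟩
      have hNn : ((N * n).toNat : ℤ) = N * n := Int.toNat_of_nonneg (by positivity)
      rw [hNn, ← hm, hu]
      exact Dvd.dvd.mul_left hqu c
    have hqP : (q : ℤ) ∣ P := Finset.dvd_prod_of_mem (fun p : ℕ => (p : ℤ)) hqS
    have hq1 : (q : ℤ) ∣ 1 := by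
      have h4 := hqP.trans hPu
      have := dvd_sub hqu h4
      simpa using this
    have : q ∣ 1 := Int.natCast_dvd_natCast.mp hq1
    have := Nat.le_of_dvd one_pos this
    have := hqp.two_le
    omega
end

section
/- The equation y² + 3 = x³ - x has no solutions with x and y integers. -/
lemma leg_three_two : legendreSym 3 (2 : ℤ) = -1 := by
  rw [legendreSym.eq_neg_one_iff (p := 3)]
  decide

lemma prime_mod3 (p : ℕ) [hp : Fact p.Prime] (h2 : p ≠ 2) (h3 : p ≠ 3)
    (hs : IsSquare (-3 : ZMod p)) : p % 3 = 1 := by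
  have h3' : Fact (Nat.Prime 3) := ⟨by norm_num⟩
  have hne : ((-3 : ℤ) : ZMod p) ≠ 0 := by
    rw [Int.cast_neg, neg_ne_zero]
    intro h
    have hd : (p : ℤ) ∣ 3 := (ZMod.intCast_zmod_eq_zero_iff_dvd 3 p).mp h
    have hd' : p ∣ 3 := by exact_mod_cast hd
    have := Nat.le_of_dvd (by norm_num) hd'
    have := hp.out.two_le
    omega
  have h1 : legendreSym p (-3) = 1 := by
    rw [legendreSym.eq_one_iff p hne]
    simpa using hs
  have hmul : legendreSym p (-3) = legendreSym p (-1) * legendreSym p 3 := by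
    rw [show (-3 : ℤ) = -1 * 3 by ring, legendreSym.mul]
  have hodd : p % 2 = 1 := hp.out.eq_two_or_odd.resolve_left h2
  have hrec : legendreSym p 3 = (-1) ^ (p / 2) * legendreSym 3 p := by
    have := legendreSym.quadratic_reciprocity' (p := 3) (q := p) (by norm_num) h2
    simpa using this
  have hneg1 : legendreSym p (-1) = (-1) ^ (p / 2) := by
    rw [legendreSym.at_neg_one h2, ZMod.χ₄_eq_neg_one_pow hodd]
  have key : legendreSym 3 p = 1 := by
    have hsq : ((-1 : ℤ) ^ (p / 2)) * ((-1) ^ (p / 2)) = 1 := by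
      rw [← pow_add, ← two_mul, pow_mul]; norm_num
    have : legendreSym p (-3) = legendreSym 3 p := by
      rw [hmul, hneg1, hrec]; rw [← mul_assoc, hsq, one_mul]
    rw [← this, h1]
  by_contra hne3
  have hm : p % 3 = 2 := by
    have := hp.out.two_le
    have h30 : p % 3 ≠ 0 := by
      intro h
      have : (3:ℕ) ∣ p := Nat.dvd_of_mod_eq_zero h
      exact h3 ((Nat.prime_dvd_prime_iff_eq (by norm_num) hp.out).mp this).symm
    omega
  have : legendreSym 3 (p : ℤ) = -1 := by
    rw [legendreSym.mod]
    have h2' : ((p : ℤ)) % ((3:ℕ):ℤ) = 2 := by push_cast; omega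
    rw [h2', leg_three_two]
  rw [key] at this; norm_num at this

/-- Every odd positive divisor of `y² + 3` that is coprime to `3` is `≡ 1 (mod 3)`. -/
lemma divisor_mod3 (y : ℤ) : ∀ d : ℕ, (d : ℤ) ∣ y ^ 2 + 3 → d % 2 = 1 → d % 3 ≠ 0 →
    d % 3 = 1 := by
  intro d
  induction d using Nat.strong_induction_on with
  | _ d ih =>
    intro hdvd hodd h3
    rcases eq_or_ne d 1 with rfl | hd1
    · rfl
    have hd0 : d ≠ 0 := by omega
    set p := d.minFac with hp
    have hpp : p.Prime := Nat.minFac_prime hd1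
    haveI : Fact p.Prime := ⟨hpp⟩
    have hpd : p ∣ d := Nat.minFac_dvd d
    have hp2 : p ≠ 2 := by
      intro h; rw [h] at hpd; omega
    have hp3 : p ≠ 3 := by
      intro h; rw [h] at hpd; omega
    have hpdvd : (p : ℤ) ∣ y ^ 2 + 3 := dvd_trans (by exact_mod_cast hpd) hdvd
    have hsq : IsSquare (-3 : ZMod p) := by
      have h0 : ((y ^ 2 + 3 : ℤ) : ZMod p) = 0 :=
        (ZMod.intCast_zmod_eq_zero_iff_dvd _ p).mpr hpdvd
      push_cast at h0
      exact ⟨(y : ZMod p), by linear_combination -h0⟩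
    have hpm : p % 3 = 1 := prime_mod3 p hp2 hp3 hsq
    -- recurse on d / p
    set q := d / p with hq
    have hdq : d = p * q := (Nat.mul_div_cancel' hpd).symm
    have hqd : q ∣ d := Nat.div_dvd_of_dvd hpd
    have hqlt : q < d := Nat.div_lt_self (by omega) hpp.one_lt
    have hqdvd : (q : ℤ) ∣ y ^ 2 + 3 := dvd_trans (by exact_mod_cast hqd) hdvd
    have hqodd : q % 2 = 1 := by
      by_contra hq2
      have : (2:ℕ) ∣ d := dvd_trans (Nat.dvd_of_mod_eq_zero (by omega)) hqd
      omega
    have hq3 : q % 3 ≠ 0 := by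
      intro hq3
      have : (3:ℕ) ∣ d := dvd_trans (Nat.dvd_of_mod_eq_zero hq3) hqd
      omega
    have hind : q % 3 = 1 := ih q hqlt hqdvd hqodd hq3
    rw [hdq, Nat.mul_mod, hpm, hind]

/-- The elliptic equation `y² + 3 = x³ - x` has no integer solutions. -/
theorem no_integer_solutions_elliptic :
    ¬ ∃ x y : ℤ, y ^ 2 + 3 = x ^ 3 - x := by
  rintro ⟨x, y, h⟩
  -- mod 8 analysis: x ≡ 4 (mod 8)
  have h8 : ((y : ZMod 8)) ^ 2 + 3 = (x : ZMod 8) ^ 3 - (x : ZMod 8) := by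
    exact_mod_cast congrArg (fun z : ℤ => (z : ZMod 8)) h
  have key8 : ∀ a b : ZMod 8, b ^ 2 + 3 = a ^ 3 - a → a = 4 := by decide
  have hx4 : (x : ZMod 8) = 4 := key8 _ _ h8
  have hdvd8 : (8 : ℤ) ∣ x - 4 := by
    apply (ZMod.intCast_zmod_eq_zero_iff_dvd (x - 4) 8).mp
    push_cast
    rw [hx4]
    ring
  obtain ⟨m, hm⟩ := hdvd8
  have hx : x = 8 * m + 4 := by omega
  subst hx
  -- m ≥ 0
  have hm0 : 0 ≤ m := by
    by_contra hneg
    push_neg at hneg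
    nlinarith [sq_nonneg y, sq_nonneg (m + 1), sq_nonneg m]
  obtain ⟨n, rfl⟩ := Int.eq_ofNat_of_zero_le hm0
  -- three divisors of y² + 3
  have hd1 : ((8 * n + 3 : ℕ) : ℤ) ∣ y ^ 2 + 3 :=
    ⟨(8 * (n:ℤ) + 4) ^ 2 + (8 * (n:ℤ) + 4), by push_cast; linear_combination h⟩
  have hd2 : ((8 * n + 5 : ℕ) : ℤ) ∣ y ^ 2 + 3 :=
    ⟨(8 * (n:ℤ) + 4) ^ 2 - (8 * (n:ℤ) + 4), by push_cast; linear_combination h⟩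
  have hd3 : ((2 * n + 1 : ℕ) : ℤ) ∣ y ^ 2 + 3 :=
    ⟨4 * ((8 * (n:ℤ) + 4) ^ 2 - 1), by push_cast; linear_combination h⟩
  have hn3 : n % 3 = 0 ∨ n % 3 = 1 ∨ n % 3 = 2 := by omega
  rcases hn3 with hn | hn | hn
  · have := divisor_mod3 y (8 * n + 5) hd2 (by omega) (by omega)
    omega
  · have := divisor_mod3 y (8 * n + 3) hd1 (by omega) (by omega)
    omega
  · have := divisor_mod3 y (2 * n + 1) hd3 (by omega) (by omega)
    omega
end
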